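/- arXiv:2312.13555 — 2 statements merged into one kernel-verified Lean document; each statement's English description precedes it below -/
import Mathlib

section
/- Let E be a real inner product space, let f : E → ℝ, and let w, v ∈ E. If f is three times differentiable at w (i.e., f admits a third-order Taylor expansion at w), then the central first difference satisfies f(w + ρ•v) − f(w − ρ•v) − 2ρ·⟪∇f(w), v⟫ = O(ρ³) as ρ → 0. -/
/-!
Along the line `ψ t = f (w + t • v)` the error `g t = ψ t - ψ (-t) - 2 t ψ'(0)` satisfies
`g 0 = g' 0 = 0` and `g'' t = ψ'' t - ψ'' (-t)`, which is `O(t)` because `ψ''` is differentiable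
at `0` and `g'' 0 = 0`. By the mean value inequality, a function vanishing at `0` whose derivative
is `O(tⁿ)` is itself `O(tⁿ⁺¹)`; applying this twice gives `O(t³)`.
-/

open scoped RealInnerProductSpace Topology
open Asymptotics Filter

section OneVariable

variable {𝕜 F : Type*} [RCLike 𝕜] [NormedAddCommGroup F] [NormedSpace 𝕜 F]

theorem isBigO_pow_succ_of_hasDerivAt {g g' : 𝕜 → F} {n : ℕ}
    (hg : ∀ᶠ t in 𝓝 0, HasDerivAt g (g' t) t) (hg₀ : g 0 = 0)
    (hg' : g' =O[𝓝 0] fun t => t ^ n) :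
    g =O[𝓝 0] fun t => t ^ (n + 1) := by
  obtain ⟨C, hC, hC'⟩ := hg'.exists_nonneg
  obtain ⟨δ, hδ, hball⟩ :=
    Metric.eventually_nhds_iff_ball.mp (hg.and hC'.bound)
  refine IsBigO.of_bound C (Metric.eventually_nhds_iff_ball.mpr ⟨δ, hδ, fun t ht => ?_⟩)
  have hsub : Metric.closedBall (0 : 𝕜) ‖t‖ ⊆ Metric.ball 0 δ :=
    Metric.closedBall_subset_ball (by simpa using ht)
  have hderiv_le : ∀ s ∈ Metric.closedBall (0 : 𝕜) ‖t‖, ‖g' s‖ ≤ C * ‖t‖ ^ n := fun s hs => by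
    have hs' : ‖s‖ ≤ ‖t‖ := by simpa using hs
    calc ‖g' s‖ ≤ C * ‖s ^ n‖ := (hball s (hsub hs)).2
      _ ≤ C * ‖t‖ ^ n := by rw [norm_pow]; gcongr
  have := (convex_closedBall (0 : 𝕜) ‖t‖).norm_image_sub_le_of_norm_hasDerivWithin_le
    (fun s hs => (hball s (hsub hs)).1.hasDerivWithinAt) hderiv_le
    (Metric.mem_closedBall_self (norm_nonneg t)) (mem_closedBall_zero_iff.mpr le_rfl)
  simpa [hg₀, norm_pow, pow_succ, mul_assoc] using this

theorem eventually_hasDerivAt_comp_neg {φ φ' : 𝕜 → F}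
    (h : ∀ᶠ t in 𝓝 0, HasDerivAt φ (φ' t) t) :
    ∀ᶠ t in 𝓝 0, HasDerivAt (fun s => φ (-s)) (-φ' (-t)) t := by
  have hneg : Tendsto (fun t : 𝕜 => -t) (𝓝 0) (𝓝 0) := by
    simpa using (continuous_neg (G := 𝕜)).tendsto 0
  filter_upwards [hneg.eventually h] with t ht
  simpa using (show HasDerivAt φ (φ' (-t)) (0 - t) by rwa [zero_sub]).comp_const_sub 0 t

theorem central_difference_sub_deriv_isBigO_cube {ψ ψ' ψ'' : 𝕜 → F}
    (h₁ : ∀ᶠ t in 𝓝 0, HasDerivAt ψ (ψ' t) t) (h₂ : ∀ᶠ t in 𝓝 0, HasDerivAt ψ' (ψ'' t) t)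
    (h₃ : DifferentiableAt 𝕜 ψ'' 0) :
    (fun t => ψ t - ψ (-t) - (2 * t) • ψ' 0) =O[𝓝 0] fun t => t ^ 3 := by
  have hlin : ∀ t : 𝕜, HasDerivAt (fun t => (2 * t) • ψ' 0) ((2 : 𝕜) • ψ' 0) t := fun t => by
    simpa using ((hasDerivAt_id t).const_mul (2 : 𝕜)).smul_const (ψ' 0)
  have hdiff : ∀ᶠ t in 𝓝 0, HasDerivAt (fun t => ψ t - ψ (-t) - (2 * t) • ψ' 0)
      (ψ' t + ψ' (-t) - (2 : 𝕜) • ψ' 0) t := by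
    filter_upwards [h₁, eventually_hasDerivAt_comp_neg h₁] with t ht ht'
    have h := (ht.sub ht').sub (hlin t)
    rw [sub_neg_eq_add] at h
    exact h
  have hdiff' : ∀ᶠ t in 𝓝 0, HasDerivAt (fun t => ψ' t + ψ' (-t) - (2 : 𝕜) • ψ' 0)
      (ψ'' t - ψ'' (-t)) t := by
    filter_upwards [h₂, eventually_hasDerivAt_comp_neg h₂] with t ht ht'
    have h := (ht.add ht').sub_const ((2 : 𝕜) • ψ' 0)
    rw [← sub_eq_add_neg] at h
    exact h
  have hdiff'' : DifferentiableAt 𝕜 (fun t => ψ'' t - ψ'' (-t)) 0 :=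
    h₃.sub (differentiableAt_comp_neg.mpr (by simpa using h₃))
  have hO₁ : (fun t => ψ'' t - ψ'' (-t)) =O[𝓝 0] fun t => t ^ 1 := by
    simpa using hdiff''.isBigO_sub
  have hO₂ := isBigO_pow_succ_of_hasDerivAt hdiff' (by simp [two_smul]) hO₁
  exact isBigO_pow_succ_of_hasDerivAt hdiff (by simp) hO₂

end OneVariable

theorem DifferentiableAt.hasDerivAt_comp_add_smul {𝕜 E G : Type*} [NontriviallyNormedField 𝕜]
    [NormedAddCommGroup E] [NormedSpace 𝕜 E] [NormedAddCommGroup G] [NormedSpace 𝕜 G]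
    {h : E → G} {w v : E} {t : 𝕜} (hh : DifferentiableAt 𝕜 h (w + t • v)) :
    HasDerivAt (fun s : 𝕜 => h (w + s • v)) (fderiv 𝕜 h (w + t • v) v) t :=
  hh.hasFDerivAt.comp_hasDerivAt t (by simpa using ((hasDerivAt_id t).smul_const v).const_add w)

/-- For a three times differentiable function, the central first difference approximates
`2ρ ⟪∇f(w), v⟫` with error `O(ρ³)` as `ρ → 0`. -/
theorem central_first_difference_isBigO_cube
    {E : Type*} [NormedAddCommGroup E] [InnerProductSpace ℝ E] [CompleteSpace E]
    (f : E → ℝ) (w v : E)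
    (h₁ : ∀ᶠ x in 𝓝 w, DifferentiableAt ℝ f x)
    (h₂ : ∀ᶠ x in 𝓝 w, DifferentiableAt ℝ (fderiv ℝ f) x)
    (h₃ : DifferentiableAt ℝ (fderiv ℝ (fderiv ℝ f)) w) :
    (fun ρ : ℝ => f (w + ρ • v) - f (w - ρ • v) - 2 * ρ * ⟪gradient f w, v⟫)
      =O[𝓝 (0 : ℝ)] (fun ρ : ℝ => ρ ^ 3) := by
  have hline : Tendsto (fun t : ℝ => w + t • v) (𝓝 0) (𝓝 w) :=
    Continuous.tendsto' (by fun_prop) 0 w (by simp)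
  have hψ : ∀ᶠ t in 𝓝 (0 : ℝ), HasDerivAt (fun t => f (w + t • v))
      (fderiv ℝ f (w + t • v) v) t :=
    (hline.eventually h₁).mono fun t ht => ht.hasDerivAt_comp_add_smul
  have hψ' : ∀ᶠ t in 𝓝 (0 : ℝ), HasDerivAt (fun t => fderiv ℝ f (w + t • v) v)
      (fderiv ℝ (fderiv ℝ f) (w + t • v) v v) t :=
    (hline.eventually h₂).mono fun t ht =>
      (ContinuousLinearMap.apply ℝ ℝ v).hasFDerivAt.comp_hasDerivAt t
        ht.hasDerivAt_comp_add_smul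
  have hψ'' : DifferentiableAt ℝ (fun t : ℝ => fderiv ℝ (fderiv ℝ f) (w + t • v) v v) 0 := by
    have h : DifferentiableAt ℝ (fun t : ℝ => fderiv ℝ (fderiv ℝ f) (w + t • v)) 0 :=
      DifferentiableAt.comp (𝕜 := ℝ) (g := fderiv ℝ (fderiv ℝ f)) (f := fun t : ℝ => w + t • v) 0
        (by simpa using h₃) (by fun_prop)
    fun_prop
  refine (central_difference_sub_deriv_isBigO_cube hψ hψ' hψ'').congr_left fun ρ => ?_
  simp [inner_gradient_left, neg_smul, ← sub_eq_add_neg, mul_assoc]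
end

section
/- Let E be a real inner product space, let f : E → ℝ be differentiable on the closed ball of radius r > 0 centered at w ∈ E, and suppose the gradient x ↦ ∇f(x) is Lipschitz with constant M ≥ 0 on that ball. Then for every ρ with 0 < ρ ≤ r, the true sharpness satisfies | sSup {f(w + ρ•v) : ‖v‖ ≤ 1} − f(w) − ρ·‖∇f(w)‖ | ≤ (M/2)·ρ². -/
open scoped RealInnerProductSpace
open Set Metric

/-! Along the segment from `x` to `y`, the derivative of `t ↦ f (x + t • (y - x))` drifts from
its value at `0` by at most `M t ‖y - x‖²`; integrating this drift gives the first-order Taylor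
bound `M ‖y - x‖² / 2`. For `y = w + ρ v` the linear term is `ρ ⟪∇f w, v⟫`, whose supremum over the
unit ball is `ρ ‖∇f w‖`, attained at `v = ∇f w / ‖∇f w‖`. -/

theorem norm_sub_sub_deriv_le_of_norm_deriv_sub_le {F : Type*} [NormedAddCommGroup F]
    [NormedSpace ℝ F] {φ φ' : ℝ → F} {K : ℝ}
    (hφ : ∀ t ∈ Icc (0 : ℝ) 1, HasDerivWithinAt φ (φ' t) (Icc 0 1) t)
    (hφ' : ∀ t ∈ Ico (0 : ℝ) 1, ‖φ' t - φ' 0‖ ≤ K * t) :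
    ‖φ 1 - φ 0 - φ' 0‖ ≤ K / 2 := by
  set R : ℝ → F := fun t => φ t - φ 0 - t • φ' 0
  have hR : ∀ t ∈ Icc (0 : ℝ) 1, HasDerivWithinAt R (φ' t - φ' 0) (Icc 0 1) t := fun t ht =>
    ((hφ t ht).sub_const (φ 0)).sub (((hasDerivWithinAt_id t _).smul_const (φ' 0)).congr_deriv
      (one_smul ℝ _))
  have hB : ∀ t, HasDerivAt (fun t : ℝ => K / 2 * t ^ 2) (K * t) t := fun t =>
    ((hasDerivAt_pow 2 t).const_mul (K / 2)).congr_deriv (by ring)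
  have key := image_norm_le_of_norm_deriv_right_le_deriv_boundary
    (fun t ht => (hR t ht).continuousWithinAt)
    (fun t ht => (hR t (Ico_subset_Icc_self ht)).mono_of_mem_nhdsWithin
      (Filter.mem_of_superset (Icc_mem_nhdsGE ht.2) (Icc_subset_Icc_left ht.1)))
    (by simp [R]) hB hφ' (right_mem_Icc.2 zero_le_one)
  simpa [R] using key

theorem Convex.norm_image_sub_sub_fderiv_le {E F : Type*} [NormedAddCommGroup E]
    [NormedSpace ℝ E] [NormedAddCommGroup F] [NormedSpace ℝ F] {f : E → F}
    {f' : E → E →L[ℝ] F} {s : Set E} {x y : E} {M : ℝ} (hs : Convex ℝ s)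
    (hf : ∀ z ∈ s, HasFDerivWithinAt f (f' z) s z)
    (hf' : ∀ z ∈ s, ‖f' z - f' x‖ ≤ M * ‖z - x‖) (hx : x ∈ s) (hy : y ∈ s) :
    ‖f y - f x - f' x (y - x)‖ ≤ M / 2 * ‖y - x‖ ^ 2 := by
  have hseg : MapsTo (fun t : ℝ => x + t • (y - x)) (Icc 0 1) s :=
    fun t ht => hs.add_smul_sub_mem hx hy ht
  have hφ : ∀ t ∈ Icc (0 : ℝ) 1, HasDerivWithinAt (fun t : ℝ => f (x + t • (y - x)))
      (f' (x + t • (y - x)) (y - x)) (Icc 0 1) t := fun t ht => by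
    have hline : HasDerivWithinAt (fun t : ℝ => x + t • (y - x)) (y - x) (Icc 0 1) t := by
      simpa using ((hasDerivWithinAt_id t _).smul_const (y - x)).const_add x
    exact (hf _ (hseg ht)).comp_hasDerivWithinAt t hline hseg
  have hdrift : ∀ t ∈ Ico (0 : ℝ) 1, ‖f' (x + t • (y - x)) (y - x) - f' (x + (0 : ℝ) • (y - x))
      (y - x)‖ ≤ M * ‖y - x‖ ^ 2 * t := fun t ht => by
    rw [zero_smul, add_zero, ← sub_apply]
    calc _ ≤ ‖f' (x + t • (y - x)) - f' x‖ * ‖y - x‖ := ContinuousLinearMap.le_opNorm _ _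
      _ ≤ M * ‖(x + t • (y - x)) - x‖ * ‖y - x‖ := by
          gcongr; exact hf' _ (hseg (Ico_subset_Icc_self ht))
      _ = M * ‖y - x‖ ^ 2 * t := by
          rw [add_sub_cancel_left, norm_smul, Real.norm_of_nonneg ht.1]; ring
  simpa [mul_div_right_comm] using norm_sub_sub_deriv_le_of_norm_deriv_sub_le hφ hdrift

theorem Convex.abs_sub_sub_inner_gradient_le {E : Type*} [NormedAddCommGroup E]
    [InnerProductSpace ℝ E] [CompleteSpace E] {f : E → ℝ} {s : Set E} {x y : E} {M : ℝ}
    (hs : Convex ℝ s) (hf : ∀ z ∈ s, DifferentiableAt ℝ f z)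
    (hf' : ∀ z ∈ s, ‖gradient f z - gradient f x‖ ≤ M * ‖z - x‖) (hx : x ∈ s) (hy : y ∈ s) :
    |f y - f x - ⟪gradient f x, y - x⟫| ≤ M / 2 * ‖y - x‖ ^ 2 := by
  have hdual : ∀ z ∈ s, ‖InnerProductSpace.toDual ℝ E (gradient f z) -
      InnerProductSpace.toDual ℝ E (gradient f x)‖ ≤ M * ‖z - x‖ := fun z hz => by
    rw [← map_sub, LinearIsometryEquiv.norm_map]; exact hf' z hz
  exact hs.norm_image_sub_sub_fderiv_le
    (fun z hz => (hf z hz).hasGradientAt.hasFDerivAt.hasFDerivWithinAt) hdual hx hy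

theorem exists_norm_le_one_inner_eq_norm {E : Type*} [NormedAddCommGroup E]
    [InnerProductSpace ℝ E] (g : E) : ∃ v : E, ‖v‖ ≤ 1 ∧ ⟪g, v⟫ = ‖g‖ := by
  rcases eq_or_ne g 0 with rfl | hg
  · exact ⟨0, by simp⟩
  · refine ⟨‖g‖⁻¹ • g, by
      rw [norm_smul, norm_inv, norm_norm, inv_mul_cancel₀ (norm_ne_zero_iff.2 hg)], ?_⟩
    rw [real_inner_smul_right, real_inner_self_eq_norm_sq]
    field_simp

theorem abs_csSup_sub_le {S : Set ℝ} {a ε : ℝ} (hub : ∀ y ∈ S, y ≤ a + ε)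
    (hlb : ∃ y ∈ S, a - ε ≤ y) : |sSup S - a| ≤ ε := by
  obtain ⟨y, hyS, hy⟩ := hlb
  have hle : sSup S ≤ a + ε := csSup_le ⟨y, hyS⟩ hub
  have hge : y ≤ sSup S := le_csSup ⟨a + ε, hub⟩ hyS
  rw [abs_le]; constructor <;> linarith

theorem true_sharpness_approx_general
    {E : Type*} [NormedAddCommGroup E] [InnerProductSpace ℝ E] [CompleteSpace E]
    (f : E → ℝ) (w : E) (r M : ℝ) (hM : 0 ≤ M)
    (hdiff : ∀ x ∈ Metric.closedBall w r, DifferentiableAt ℝ f x)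
    (hlip : ∀ x ∈ Metric.closedBall w r, ∀ y ∈ Metric.closedBall w r,
      ‖gradient f x - gradient f y‖ ≤ M * ‖x - y‖)
    (ρ : ℝ) (hρ : 0 < ρ) (hρr : ρ ≤ r) :
    |sSup {y : ℝ | ∃ v : E, ‖v‖ ≤ 1 ∧ f (w + ρ • v) = y} - f w - ρ * ‖gradient f w‖|
      ≤ (M / 2) * ρ ^ 2 := by
  have hw : w ∈ closedBall w r := mem_closedBall_self (hρ.le.trans hρr)
  have taylor : ∀ v : E, ‖v‖ ≤ 1 →
      |f (w + ρ • v) - f w - ρ * ⟪gradient f w, v⟫| ≤ M / 2 * ρ ^ 2 := fun v hv => by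
    have hstep : ‖ρ • v‖ ≤ ρ := by
      rw [norm_smul, Real.norm_of_nonneg hρ.le]; exact mul_le_of_le_one_right hρ.le hv
    have hy : w + ρ • v ∈ closedBall w r := by
      rw [mem_closedBall, dist_eq_norm, add_sub_cancel_left]; exact hstep.trans hρr
    have h := (convex_closedBall w r).abs_sub_sub_inner_gradient_le hdiff
      (fun z hz => hlip z hz w hw) hw hy
    rw [add_sub_cancel_left, real_inner_smul_right] at h
    exact h.trans (by gcongr)
  obtain ⟨v₀, hv₀, hinner⟩ := exists_norm_le_one_inner_eq_norm (gradient f w)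
  rw [sub_sub]
  refine abs_csSup_sub_le ?_ ⟨_, ⟨v₀, hv₀, rfl⟩, ?_⟩
  · rintro _ ⟨v, hv, rfl⟩
    have hcs : ⟪gradient f w, v⟫ ≤ ‖gradient f w‖ :=
      (real_inner_le_norm _ _).trans (mul_le_of_le_one_right (norm_nonneg _) hv)
    linarith [(abs_le.1 (taylor v hv)).2, mul_le_mul_of_nonneg_left hcs hρ.le]
  · have h := (abs_le.1 (taylor v₀ hv₀)).1
    rw [hinner] at h
    linarith

/-- If `f` is differentiable on the closed ball of radius `r` around `w` and its gradient is
`M`-Lipschitz there, then for `0 < ρ ≤ r` the true sharpness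
`sup_{‖v‖ ≤ 1} f(w + ρ v) - f(w)` equals `ρ ‖∇f(w)‖` up to an error of at most `(M/2) ρ²`. -/
theorem true_sharpness_approx
    {E : Type*} [NormedAddCommGroup E] [InnerProductSpace ℝ E] [CompleteSpace E]
    (f : E → ℝ) (w : E) (r M : ℝ) (hr : 0 < r) (hM : 0 ≤ M)
    (hdiff : ∀ x ∈ Metric.closedBall w r, DifferentiableAt ℝ f x)
    (hlip : ∀ x ∈ Metric.closedBall w r, ∀ y ∈ Metric.closedBall w r,
      ‖gradient f x - gradient f y‖ ≤ M * ‖x - y‖)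
    (ρ : ℝ) (hρ : 0 < ρ) (hρr : ρ ≤ r) :
    |sSup {y : ℝ | ∃ v : E, ‖v‖ ≤ 1 ∧ f (w + ρ • v) = y} - f w - ρ * ‖gradient f w‖|
      ≤ (M / 2) * ρ ^ 2 :=
  true_sharpness_approx_general f w r M hM hdiff hlip ρ hρ hρr
end
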